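/- Let ρ be a σ-finite measure on a measurable space Ω, and let μ and ν be probability measures on Ω with densities f and g with respect to ρ satisfying f > 0 and g > 0 ρ-almost everywhere. Let D* = f/(f+g). Then ∫ log(D*) dμ + ∫ log(1 − D*) dν = d_JS(μ‖ν) − log 4, where d_JS(μ‖ν) = d_KL(μ‖m) + d_KL(ν‖m) is the Jensen–Shannon divergence with midpoint measure m = (1/2)·μ + (1/2)·ν and d_KL the Kullback–Leibler divergence. -/

import Mathlib

open MeasureTheory ENNReal Filter

/-- The Kullback–Leibler divergence `d_KL(ρ‖σ) = ∫ log(dρ/dσ) dρ` if `ρ ≪ σ` (and the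
log-likelihood ratio is integrable, which for probability measures fails only when the
divergence is infinite), and `+∞` otherwise. -/
noncomputable def klDiv {Ω : Type*} [MeasurableSpace Ω] (ρ σ : Measure Ω) : ℝ≥0∞ :=
  open scoped Classical in
  if ρ ≪ σ ∧ Integrable (llr ρ σ) ρ then ENNReal.ofReal (∫ x, llr ρ σ x ∂ρ) else ⊤

/-- The total variation norm `‖ν − μ‖_TV`, i.e. the supremum of
`|∫ ψ dν − ∫ ψ dμ|` over all measurable `ψ` with `sup |ψ| ≤ 1`. -/
noncomputable def tvNorm {Ω : Type*} [MeasurableSpace Ω] (ν μ : Measure Ω) : ℝ :=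
  sSup {r : ℝ | ∃ ψ : Ω → ℝ, Measurable ψ ∧ (∀ x, |ψ x| ≤ 1) ∧
    r = |∫ x, ψ x ∂ν - ∫ x, ψ x ∂μ|}

/-!
Since `m` has density `(f + g) / 2` with respect to `ρ`, the likelihood ratios are
`dμ/dm = 2 D*` and `dν/dm = 2 (1 - D*)`, so `log D* = llr μ m - log 2` holds `μ`-a.e. and
`log (1 - D*) = llr ν m - log 2` holds `ν`-a.e. Both `μ` and `ν` are bounded by `2 • m`, hence
their densities with respect to `m` are at most `2`; this makes the log-likelihood ratios
integrable, so both divergences are finite and equal to the integrals of these ratios.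
-/

lemma InformationTheory.klFun_le_sq {x : ℝ} (hx : 0 ≤ x) : klFun x ≤ (x - 1) ^ 2 := by
  have hlog : x * Real.log x ≤ x * (x - 1) := by
    rcases hx.eq_or_lt with rfl | hx
    · simp
    · exact mul_le_mul_of_nonneg_left (Real.log_le_sub_one_of_pos hx) hx.le
  rw [klFun_apply]
  nlinarith

section KullbackLeibler

variable {α : Type*} [MeasurableSpace α] {μ ν : Measure α}

lemma MeasureTheory.Measure.rnDeriv_le_of_le_smul [SigmaFinite ν] {c : ℝ≥0∞} (h : μ ≤ c • ν) :
    μ.rnDeriv ν ≤ᵐ[ν] fun _ => c := by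
  refine ae_le_of_forall_setLIntegral_le_of_sigmaFinite (μ.measurable_rnDeriv ν) fun s _ _ ↦ ?_
  rw [setLIntegral_const, ← smul_eq_mul, ← Measure.smul_apply]
  exact (Measure.setLIntegral_rnDeriv_le s).trans (h s)

lemma MeasureTheory.Measure.integrable_llr_of_le_smul [IsFiniteMeasure μ] [IsFiniteMeasure ν]
    {c : NNReal} (h : μ ≤ c • ν) : Integrable (llr μ ν) μ := by
  rw [← InformationTheory.integrable_klFun_rnDeriv_iff (absolutelyContinuous_of_le_smul h)]
  refine .of_bound (InformationTheory.measurable_klFun.comp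
    (Measure.measurable_rnDeriv μ ν).ennreal_toReal).aestronglyMeasurable ((c + 1) ^ 2) ?_
  filter_upwards [rnDeriv_le_of_le_smul h] with x hle
  have h0 : 0 ≤ (μ.rnDeriv ν x).toReal := ENNReal.toReal_nonneg
  have hc : (μ.rnDeriv ν x).toReal ≤ c := by
    simpa using ENNReal.toReal_mono ENNReal.coe_ne_top hle
  rw [Real.norm_of_nonneg (InformationTheory.klFun_nonneg h0)]
  refine (InformationTheory.klFun_le_sq h0).trans ?_
  nlinarith [c.coe_nonneg]

/-- Mathlib's divergence adds the term `ν univ - μ univ`, which vanishes for equal masses. -/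
lemma klDiv_eq_informationTheory_klDiv (h : μ Set.univ = ν Set.univ) :
    klDiv μ ν = InformationTheory.klDiv μ ν := by
  rw [klDiv, InformationTheory.klDiv_def, measureReal_def, measureReal_def, h]
  simp only [add_sub_cancel_right]

lemma klDiv_ne_top_of_le_smul [IsFiniteMeasure μ] [IsFiniteMeasure ν] {c : NNReal}
    (h : μ ≤ c • ν) : klDiv μ ν ≠ ⊤ := by
  rw [klDiv, if_pos ⟨Measure.absolutelyContinuous_of_le_smul h,
    Measure.integrable_llr_of_le_smul h⟩]
  exact ENNReal.ofReal_ne_top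

lemma toReal_klDiv_of_measure_univ_eq [IsFiniteMeasure μ] [IsFiniteMeasure ν] (hμν : μ ≪ ν)
    (h : μ Set.univ = ν Set.univ) : (klDiv μ ν).toReal = ∫ x, llr μ ν x ∂μ := by
  rw [klDiv_eq_informationTheory_klDiv h]
  exact InformationTheory.toReal_klDiv_of_measure_eq hμν h

variable (μ ν) in
lemma MeasureTheory.Measure.le_two_smul_half_smul_add_half_smul :
    μ ≤ (2 : NNReal) • ((1 / 2 : ℝ≥0∞) • μ + (1 / 2 : ℝ≥0∞) • ν) := by
  intro s
  simp only [Measure.smul_apply, Measure.add_apply, ENNReal.smul_def, smul_eq_mul]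
  have h2 : ((2 : NNReal) : ℝ≥0∞) * (1 / 2) = 1 :=
    ENNReal.mul_div_cancel two_ne_zero ENNReal.ofNat_ne_top
  rw [mul_add, ← mul_assoc, ← mul_assoc, h2, one_mul, one_mul]
  exact le_self_add

end KullbackLeibler

section Densities

variable {α : Type*} [MeasurableSpace α] {ρ : Measure α} {f g : α → ℝ}

lemma half_smul_withDensity_add_half_smul_withDensity (hf : Measurable f) (hg : Measurable g)
    (hf0 : 0 ≤ᵐ[ρ] f) (hg0 : 0 ≤ᵐ[ρ] g) :
    (1 / 2 : ℝ≥0∞) • ρ.withDensity (fun x => ENNReal.ofReal (f x))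
        + (1 / 2 : ℝ≥0∞) • ρ.withDensity (fun x => ENNReal.ofReal (g x))
      = ρ.withDensity (fun x => ENNReal.ofReal ((f x + g x) / 2)) := by
  rw [← withDensity_smul _ hf.ennreal_ofReal, ← withDensity_smul _ hg.ennreal_ofReal,
    ← withDensity_add_left (hf.ennreal_ofReal.const_smul _)]
  refine withDensity_congr_ae ?_
  filter_upwards [hf0, hg0] with x hfx hgx
  simp only [Pi.add_apply, Pi.smul_apply, smul_eq_mul]
  rw [ENNReal.ofReal_div_of_pos two_pos, ENNReal.ofReal_add hfx hgx, ENNReal.ofReal_ofNat,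
    ENNReal.add_div]
  simp only [ENNReal.div_eq_inv_mul, one_div]

lemma llr_withDensity_ofReal [SigmaFinite ρ] (hf : Measurable f) (hg : Measurable g)
    (hf0 : 0 ≤ᵐ[ρ] f) (hg0 : 0 ≤ᵐ[ρ] g) :
    llr (ρ.withDensity fun x => ENNReal.ofReal (f x)) (ρ.withDensity fun x => ENNReal.ofReal (g x))
      =ᵐ[ρ.withDensity fun x => ENNReal.ofReal (g x)] fun x => Real.log (f x / g x) := by
  have hac := withDensity_absolutelyContinuous ρ fun x => ENNReal.ofReal (g x)
  filter_upwards [Measure.rnDeriv_eq_div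
      (withDensity_absolutelyContinuous ρ fun x => ENNReal.ofReal (f x)) hac,
    hac (Measure.rnDeriv_withDensity ρ hf.ennreal_ofReal),
    hac (Measure.rnDeriv_withDensity ρ hg.ennreal_ofReal), hac hf0, hac hg0]
    with x hdiv hfx hgx hf0x hg0x
  simp only [llr_def]
  rw [hdiv, hfx, hgx, ENNReal.toReal_div, ENNReal.toReal_ofReal hf0x,
    ENNReal.toReal_ofReal hg0x]

lemma integral_log_div_add_eq_integral_llr_sub_log_two [SigmaFinite ρ] (hf : Measurable f)
    (hg : Measurable g) (hfpos : ∀ᵐ x ∂ρ, 0 < f x) (hgpos : ∀ᵐ x ∂ρ, 0 < g x)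
    {μ m : Measure α} [IsProbabilityMeasure μ] [IsFiniteMeasure m]
    (hμ : μ = ρ.withDensity fun x => ENNReal.ofReal (f x))
    (hm : m = ρ.withDensity fun x => ENNReal.ofReal ((f x + g x) / 2))
    (hμm : μ ≤ (2 : NNReal) • m) :
    ∫ x, Real.log (f x / (f x + g x)) ∂μ = ∫ x, llr μ m x ∂μ - Real.log 2 := by
  have hμρ : μ ≪ ρ := hμ ▸ withDensity_absolutelyContinuous _ _
  have hllr : llr μ m =ᵐ[μ] fun x => Real.log (f x / ((f x + g x) / 2)) := by
    refine (Measure.absolutelyContinuous_of_le_smul hμm).ae_le ?_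
    rw [hμ, hm]
    exact llr_withDensity_ofReal hf ((hf.add hg).div_const 2)
      (hfpos.mono fun x hx => hx.le) (by filter_upwards [hfpos, hgpos] with x hfx hgx; positivity)
  have hlog : (fun x => Real.log (f x / (f x + g x))) =ᵐ[μ] fun x => llr μ m x - Real.log 2 := by
    filter_upwards [hllr, hμρ.ae_le hfpos, hμρ.ae_le hgpos] with x hx hfx hgx
    rw [hx, ← Real.log_div (by positivity) two_ne_zero]
    congr 1
    field_simp
  rw [integral_congr_ae hlog, integral_sub (Measure.integrable_llr_of_le_smul hμm)
    (integrable_const _), integral_const, probReal_univ, one_smul]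

end Densities

/-- If `μ, ν` are probability measures with (a.e. positive) densities
`f, g` with respect to a σ-finite measure `ρ`, and `D* = f / (f + g)` is the optimal
discriminator, then the GAN loss at `D*` equals the Jensen–Shannon divergence
`d_JS(μ‖ν) = d_KL(μ‖m) + d_KL(ν‖m)` (with `m = (1/2)·μ + (1/2)·ν`) minus `log 4`. -/
theorem gan_loss_at_optimal_discriminator {Ω : Type*} [MeasurableSpace Ω]
    (ρ : Measure Ω) [SigmaFinite ρ]
    (f g : Ω → ℝ) (hf : Measurable f) (hg : Measurable g)
    (hfpos : ∀ᵐ x ∂ρ, 0 < f x) (hgpos : ∀ᵐ x ∂ρ, 0 < g x)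
    (μ ν : Measure Ω) [IsProbabilityMeasure μ] [IsProbabilityMeasure ν]
    (hμ : μ = ρ.withDensity (fun x => ENNReal.ofReal (f x)))
    (hν : ν = ρ.withDensity (fun x => ENNReal.ofReal (g x)))
    (Dstar : Ω → ℝ) (hD : Dstar = fun x => f x / (f x + g x))
    (m : Measure Ω) (hm : m = (1 / 2 : ℝ≥0∞) • μ + (1 / 2 : ℝ≥0∞) • ν) :
    ∫ x, Real.log (Dstar x) ∂μ + ∫ x, Real.log (1 - Dstar x) ∂ν
      = (klDiv μ m + klDiv ν m).toReal - Real.log 4 := by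
  have hm_density : m = ρ.withDensity fun x => ENNReal.ofReal ((f x + g x) / 2) := by
    rw [hm, hμ, hν, half_smul_withDensity_add_half_smul_withDensity hf hg
      (hfpos.mono fun _ hx => hx.le) (hgpos.mono fun _ hx => hx.le)]
  have : IsProbabilityMeasure m := ⟨by simp [hm, ENNReal.inv_two_add_inv_two]⟩
  have hμm : μ ≤ (2 : NNReal) • m := hm ▸ Measure.le_two_smul_half_smul_add_half_smul μ ν
  have hνm : ν ≤ (2 : NNReal) • m := by
    rw [hm, add_comm]
    exact Measure.le_two_smul_half_smul_add_half_smul ν μ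
  have hμ_term : ∫ x, Real.log (Dstar x) ∂μ = ∫ x, llr μ m x ∂μ - Real.log 2 :=
    hD ▸ integral_log_div_add_eq_integral_llr_sub_log_two hf hg hfpos hgpos hμ hm_density hμm
  have hν_term : ∫ x, Real.log (1 - Dstar x) ∂ν = ∫ x, llr ν m x ∂ν - Real.log 2 := by
    rw [← integral_log_div_add_eq_integral_llr_sub_log_two hg hf hgpos hfpos hν
      (by simpa only [add_comm] using hm_density) hνm]
    have hνρ : ν ≪ ρ := hν ▸ withDensity_absolutelyContinuous _ _
    refine integral_congr_ae ?_
    filter_upwards [hνρ.ae_le hfpos, hνρ.ae_le hgpos] with x hfx hgx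
    rw [hD, one_sub_div (by positivity), add_sub_cancel_left, add_comm]
  rw [hμ_term, hν_term, ENNReal.toReal_add (klDiv_ne_top_of_le_smul hμm)
      (klDiv_ne_top_of_le_smul hνm),
    toReal_klDiv_of_measure_univ_eq (Measure.absolutelyContinuous_of_le_smul hμm) (by simp),
    toReal_klDiv_of_measure_univ_eq (Measure.absolutelyContinuous_of_le_smul hνm) (by simp),
    show (4 : ℝ) = 2 * 2 by norm_num, Real.log_mul two_ne_zero two_ne_zero]
  ring
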